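/- If u : ℝ³ → ℝ³ satisfies curl u = λ • u with λ ≠ 0, and v(x) = ⟪x, u(x)⟫ is the inner product of the position vector with u, then Δv = −λ² v, i.e. v is an eigenfunction of the scalar Laplacian with eigenvalue −λ². -/

import Mathlib

open Real

/-- Partial derivative of a scalar function on ℝ³ in direction `i`. -/
noncomputable def pd (i : Fin 3) (f : (Fin 3 → ℝ) → ℝ) (x : Fin 3 → ℝ) : ℝ :=
  fderiv ℝ f x (Pi.single i 1)

/-- Gradient of a scalar function on ℝ³. -/
noncomputable def grad (h : (Fin 3 → ℝ) → ℝ) (x : Fin 3 → ℝ) : Fin 3 → ℝ :=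
  fun i => pd i h x

/-- Curl of a vector field on ℝ³. -/
noncomputable def curl (u : (Fin 3 → ℝ) → Fin 3 → ℝ) (x : Fin 3 → ℝ) : Fin 3 → ℝ :=
  ![pd 1 (fun y => u y 2) x - pd 2 (fun y => u y 1) x,
    pd 2 (fun y => u y 0) x - pd 0 (fun y => u y 2) x,
    pd 0 (fun y => u y 1) x - pd 1 (fun y => u y 0) x]

/-- Divergence of a vector field on ℝ³. -/
noncomputable def div3 (u : (Fin 3 → ℝ) → Fin 3 → ℝ) (x : Fin 3 → ℝ) : ℝ :=
  pd 0 (fun y => u y 0) x + pd 1 (fun y => u y 1) x + pd 2 (fun y => u y 2) x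

/-- Scalar Laplacian on ℝ³. -/
noncomputable def lap (f : (Fin 3 → ℝ) → ℝ) (x : Fin 3 → ℝ) : ℝ :=
  ∑ i : Fin 3, pd i (fun y => pd i f y) x

namespace BeltramiAux

abbrev E3 := Fin 3 → ℝ

lemma pd_contDiff {m n : WithTop ℕ∞} {f : E3 → ℝ} (hf : ContDiff ℝ n f) (h : m + 1 ≤ n)
    (i : Fin 3) : ContDiff ℝ m (fun y => pd i f y) := by
  have := (ContinuousLinearMap.apply ℝ ℝ (Pi.single i 1 : E3)).contDiff.comp (hf.fderiv_right h)
  exact this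

lemma pd_add {f g : E3 → ℝ} {x : E3} (hf : DifferentiableAt ℝ f x)
    (hg : DifferentiableAt ℝ g x) (i : Fin 3) :
    pd i (fun y => f y + g y) x = pd i f x + pd i g x := by
  simp [pd, fderiv_fun_add hf hg]

lemma pd_sub {f g : E3 → ℝ} {x : E3} (hf : DifferentiableAt ℝ f x)
    (hg : DifferentiableAt ℝ g x) (i : Fin 3) :
    pd i (fun y => f y - g y) x = pd i f x - pd i g x := by
  simp [pd, fderiv_fun_sub hf hg]

lemma pd_const_mul {f : E3 → ℝ} {x : E3} (hf : DifferentiableAt ℝ f x) (c : ℝ) (i : Fin 3) :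
    pd i (fun y => c * f y) x = c * pd i f x := by
  simp [pd, fderiv_const_mul hf c]

lemma pd_const (c : ℝ) (i : Fin 3) (x : E3) : pd i (fun _ => c) x = 0 := by
  simp [pd]

lemma pd_mul {f g : E3 → ℝ} {x : E3} (hf : DifferentiableAt ℝ f x)
    (hg : DifferentiableAt ℝ g x) (i : Fin 3) :
    pd i (fun y => f y * g y) x = f x * pd i g x + g x * pd i f x := by
  simp [pd, fderiv_fun_mul hf hg]

lemma coord_differentiableAt (k : Fin 3) (x : E3) :
    DifferentiableAt ℝ (fun y : E3 => y k) x :=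
  (ContinuousLinearMap.proj (R := ℝ) (φ := fun _ : Fin 3 => ℝ) k).differentiableAt

lemma pd_coord (j k : Fin 3) (x : E3) :
    pd j (fun y : E3 => y k) x = if k = j then (1:ℝ) else 0 := by
  have h : (fun y : E3 => y k)
      = (ContinuousLinearMap.proj (R := ℝ) (φ := fun _ : Fin 3 => ℝ) k : E3 →L[ℝ] ℝ) := rfl
  rw [pd, h, ContinuousLinearMap.fderiv]
  simp [Pi.single_apply]

lemma pd_comm {f : E3 → ℝ} (hf : ContDiff ℝ 2 f) (i j : Fin 3) (x : E3) :
    pd i (fun y => pd j f y) x = pd j (fun y => pd i f y) x := by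
  have hd : DifferentiableAt ℝ (fderiv ℝ f) x :=
    ((hf.fderiv_right (m := 1) (by norm_num)).differentiable (by norm_num)).differentiableAt
  have key : ∀ a b : Fin 3, pd a (fun y => pd b f y) x
      = fderiv ℝ (fderiv ℝ f) x (Pi.single a 1) (Pi.single b 1) := by
    intro a b
    have h1 : pd a (fun y => pd b f y) x
        = fderiv ℝ (fun y => (fderiv ℝ f y) ((fun _ : E3 => (Pi.single b 1 : E3)) y)) x
            (Pi.single a 1) := rfl
    rw [h1, fderiv_clm_apply hd (differentiableAt_const _)]
    simp
  rw [key, key]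
  exact (hf.contDiffAt.isSymmSndFDerivAt (by simp [minSmoothness_of_isRCLikeNormedField])) _ _

end BeltramiAux

open BeltramiAux

/-- If `u` is a `C³` Beltrami field (`curl u = λ • u`, `λ ≠ 0`) and
`v x = ⟪x, u x⟫`, then `Δ v = −λ² v`. -/
theorem lap_inner_position_beltrami (u : (Fin 3 → ℝ) → Fin 3 → ℝ)
    (hu : ContDiff ℝ 3 u) (lam : ℝ) (hlam : lam ≠ 0)
    (hbel : ∀ x : Fin 3 → ℝ, curl u x = lam • u x)
    (v : (Fin 3 → ℝ) → ℝ) (hv : ∀ x, v x = ∑ i : Fin 3, x i * u x i) :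
    ∀ x : Fin 3 → ℝ, lap v x = -(lam ^ 2) * v x := by
  classical
  have hC : ∀ k : Fin 3, ContDiff ℝ 3 (fun y => u y k) := fun k => by
    have := (ContinuousLinearMap.proj (R := ℝ) (φ := fun _ : Fin 3 => ℝ) k).contDiff.comp hu
    exact this
  have hC2 : ∀ k : Fin 3, ContDiff ℝ 2 (fun y => u y k) := fun k => (hC k).of_le (by norm_num)
  have hD : ∀ (k : Fin 3) (x : E3), DifferentiableAt ℝ (fun y => u y k) x :=
    fun k x => ((hC k).differentiable (by norm_num)).differentiableAt
  have hpdC2 : ∀ j k : Fin 3, ContDiff ℝ 2 (fun y => pd j (fun z => u z k) y) :=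
    fun j k => pd_contDiff (hC k) (by norm_num) j
  have hpdD : ∀ (j k : Fin 3) (x : E3),
      DifferentiableAt ℝ (fun y => pd j (fun z => u z k) y) x :=
    fun j k x => ((hpdC2 j k).differentiable (by norm_num)).differentiableAt
  -- Beltrami equation, componentwise
  have hb0 : ∀ x : E3, pd 1 (fun y => u y 2) x - pd 2 (fun y => u y 1) x = lam * u x 0 :=
    fun x => by have := congrFun (hbel x) 0; simpa [curl] using this
  have hb1 : ∀ x : E3, pd 2 (fun y => u y 0) x - pd 0 (fun y => u y 2) x = lam * u x 1 :=
    fun x => by have := congrFun (hbel x) 1; simpa [curl] using this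
  have hb2 : ∀ x : E3, pd 0 (fun y => u y 1) x - pd 1 (fun y => u y 0) x = lam * u x 2 :=
    fun x => by have := congrFun (hbel x) 2; simpa [curl] using this
  -- divergence free
  have hdiv : ∀ x : E3,
      pd 0 (fun y => u y 0) x + pd 1 (fun y => u y 1) x + pd 2 (fun y => u y 2) x = 0 := by
    intro x
    have e0 : lam * pd 0 (fun y => u y 0) x
        = pd 0 (fun y => pd 1 (fun z => u z 2) y) x
          - pd 0 (fun y => pd 2 (fun z => u z 1) y) x := by
      rw [← pd_const_mul (hD 0 x) lam 0,
        show (fun y => lam * u y 0)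
            = fun y => pd 1 (fun z => u z 2) y - pd 2 (fun z => u z 1) y from
          funext fun y => (hb0 y).symm,
        pd_sub (hpdD 1 2 x) (hpdD 2 1 x) 0]
    have e1 : lam * pd 1 (fun y => u y 1) x
        = pd 1 (fun y => pd 2 (fun z => u z 0) y) x
          - pd 1 (fun y => pd 0 (fun z => u z 2) y) x := by
      rw [← pd_const_mul (hD 1 x) lam 1,
        show (fun y => lam * u y 1)
            = fun y => pd 2 (fun z => u z 0) y - pd 0 (fun z => u z 2) y from
          funext fun y => (hb1 y).symm,
        pd_sub (hpdD 2 0 x) (hpdD 0 2 x) 1]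
    have e2 : lam * pd 2 (fun y => u y 2) x
        = pd 2 (fun y => pd 0 (fun z => u z 1) y) x
          - pd 2 (fun y => pd 1 (fun z => u z 0) y) x := by
      rw [← pd_const_mul (hD 2 x) lam 2,
        show (fun y => lam * u y 2)
            = fun y => pd 0 (fun z => u z 1) y - pd 1 (fun z => u z 0) y from
          funext fun y => (hb2 y).symm,
        pd_sub (hpdD 0 1 x) (hpdD 1 0 x) 2]
    have c1 := pd_comm (hC2 2) 0 1 x
    have c2 := pd_comm (hC2 1) 0 2 x
    have c3 := pd_comm (hC2 0) 1 2 x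
    have hz : lam * (pd 0 (fun y => u y 0) x + pd 1 (fun y => u y 1) x
        + pd 2 (fun y => u y 2) x) = 0 := by
      rw [mul_add, mul_add, e0, e1, e2]
      linarith [c1, c2, c3]
    rcases mul_eq_zero.mp hz with h | h
    · exact absurd h hlam
    · exact h
  -- gradient of divergence vanishes
  have hgdiv : ∀ (i : Fin 3) (x : E3),
      pd i (fun y => pd 0 (fun z => u z 0) y) x + pd i (fun y => pd 1 (fun z => u z 1) y) x
        + pd i (fun y => pd 2 (fun z => u z 2) y) x = 0 := by
    intro i x
    have h2 : pd i (fun y => pd 0 (fun z => u z 0) y + pd 1 (fun z => u z 1) y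
        + pd 2 (fun z => u z 2) y) x
        = pd i (fun y => pd 0 (fun z => u z 0) y) x + pd i (fun y => pd 1 (fun z => u z 1) y) x
          + pd i (fun y => pd 2 (fun z => u z 2) y) x := by
      rw [pd_add ((hpdD 0 0 x).fun_add (hpdD 1 1 x)) (hpdD 2 2 x) i,
        pd_add (hpdD 0 0 x) (hpdD 1 1 x) i]
    rw [← h2,
      show (fun y => pd 0 (fun z => u z 0) y + pd 1 (fun z => u z 1) y
          + pd 2 (fun z => u z 2) y) = fun _ : E3 => (0:ℝ) from funext fun y => hdiv y,
      pd_const]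
  -- componentwise vector Laplacian
  have hlap0 : ∀ x : E3,
      pd 0 (fun y => pd 0 (fun z => u z 0) y) x + pd 1 (fun y => pd 1 (fun z => u z 0) y) x
        + pd 2 (fun y => pd 2 (fun z => u z 0) y) x = -(lam ^ 2) * u x 0 := by
    intro x
    have e1 : lam * pd 1 (fun y => u y 2) x
        = pd 1 (fun y => pd 0 (fun z => u z 1) y) x
          - pd 1 (fun y => pd 1 (fun z => u z 0) y) x := by
      rw [← pd_const_mul (hD 2 x) lam 1,
        show (fun y => lam * u y 2)
            = fun y => pd 0 (fun z => u z 1) y - pd 1 (fun z => u z 0) y from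
          funext fun y => (hb2 y).symm,
        pd_sub (hpdD 0 1 x) (hpdD 1 0 x) 1]
    have e2 : lam * pd 2 (fun y => u y 1) x
        = pd 2 (fun y => pd 2 (fun z => u z 0) y) x
          - pd 2 (fun y => pd 0 (fun z => u z 2) y) x := by
      rw [← pd_const_mul (hD 1 x) lam 2,
        show (fun y => lam * u y 1)
            = fun y => pd 2 (fun z => u z 0) y - pd 0 (fun z => u z 2) y from
          funext fun y => (hb1 y).symm,
        pd_sub (hpdD 2 0 x) (hpdD 0 2 x) 2]
    have key : lam ^ 2 * u x 0
        = lam * pd 1 (fun y => u y 2) x - lam * pd 2 (fun y => u y 1) x := by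
      linear_combination (-lam) * hb0 x
    rw [e1, e2] at key
    have c1 := pd_comm (hC2 1) 1 0 x
    have c2 := pd_comm (hC2 2) 2 0 x
    have hg := hgdiv 0 x
    linarith [key, c1, c2, hg]
  have hlap1 : ∀ x : E3,
      pd 0 (fun y => pd 0 (fun z => u z 1) y) x + pd 1 (fun y => pd 1 (fun z => u z 1) y) x
        + pd 2 (fun y => pd 2 (fun z => u z 1) y) x = -(lam ^ 2) * u x 1 := by
    intro x
    have e1 : lam * pd 2 (fun y => u y 0) x
        = pd 2 (fun y => pd 1 (fun z => u z 2) y) x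
          - pd 2 (fun y => pd 2 (fun z => u z 1) y) x := by
      rw [← pd_const_mul (hD 0 x) lam 2,
        show (fun y => lam * u y 0)
            = fun y => pd 1 (fun z => u z 2) y - pd 2 (fun z => u z 1) y from
          funext fun y => (hb0 y).symm,
        pd_sub (hpdD 1 2 x) (hpdD 2 1 x) 2]
    have e2 : lam * pd 0 (fun y => u y 2) x
        = pd 0 (fun y => pd 0 (fun z => u z 1) y) x
          - pd 0 (fun y => pd 1 (fun z => u z 0) y) x := by
      rw [← pd_const_mul (hD 2 x) lam 0,
        show (fun y => lam * u y 2)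
            = fun y => pd 0 (fun z => u z 1) y - pd 1 (fun z => u z 0) y from
          funext fun y => (hb2 y).symm,
        pd_sub (hpdD 0 1 x) (hpdD 1 0 x) 0]
    have key : lam ^ 2 * u x 1
        = lam * pd 2 (fun y => u y 0) x - lam * pd 0 (fun y => u y 2) x := by
      linear_combination (-lam) * hb1 x
    rw [e1, e2] at key
    have c1 := pd_comm (hC2 2) 2 1 x
    have c2 := pd_comm (hC2 0) 0 1 x
    have hg := hgdiv 1 x
    linarith [key, c1, c2, hg]
  have hlap2 : ∀ x : E3,
      pd 0 (fun y => pd 0 (fun z => u z 2) y) x + pd 1 (fun y => pd 1 (fun z => u z 2) y) x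
        + pd 2 (fun y => pd 2 (fun z => u z 2) y) x = -(lam ^ 2) * u x 2 := by
    intro x
    have e1 : lam * pd 0 (fun y => u y 1) x
        = pd 0 (fun y => pd 2 (fun z => u z 0) y) x
          - pd 0 (fun y => pd 0 (fun z => u z 2) y) x := by
      rw [← pd_const_mul (hD 1 x) lam 0,
        show (fun y => lam * u y 1)
            = fun y => pd 2 (fun z => u z 0) y - pd 0 (fun z => u z 2) y from
          funext fun y => (hb1 y).symm,
        pd_sub (hpdD 2 0 x) (hpdD 0 2 x) 0]
    have e2 : lam * pd 1 (fun y => u y 0) x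
        = pd 1 (fun y => pd 1 (fun z => u z 2) y) x
          - pd 1 (fun y => pd 2 (fun z => u z 1) y) x := by
      rw [← pd_const_mul (hD 0 x) lam 1,
        show (fun y => lam * u y 0)
            = fun y => pd 1 (fun z => u z 2) y - pd 2 (fun z => u z 1) y from
          funext fun y => (hb0 y).symm,
        pd_sub (hpdD 1 2 x) (hpdD 2 1 x) 1]
    have key : lam ^ 2 * u x 2
        = lam * pd 0 (fun y => u y 1) x - lam * pd 1 (fun y => u y 0) x := by
      linear_combination (-lam) * hb2 x
    rw [e1, e2] at key
    have c1 := pd_comm (hC2 0) 0 2 x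
    have c2 := pd_comm (hC2 1) 1 2 x
    have hg := hgdiv 2 x
    linarith [key, c1, c2, hg]
  -- first partials of v
  have hvfun : v = fun y => y 0 * u y 0 + y 1 * u y 1 + y 2 * u y 2 :=
    funext fun y => by rw [hv y, Fin.sum_univ_three]
  have hpdv : ∀ (j : Fin 3) (y : E3), pd j v y
      = u y j + (y 0 * pd j (fun z => u z 0) y + y 1 * pd j (fun z => u z 1) y
          + y 2 * pd j (fun z => u z 2) y) := by
    intro j y
    have dm : ∀ k : Fin 3, DifferentiableAt ℝ (fun z : E3 => z k * u z k) y :=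
      fun k => (coord_differentiableAt k y).mul (hD k y)
    rw [hvfun, pd_add ((dm 0).fun_add (dm 1)) (dm 2) j, pd_add (dm 0) (dm 1) j,
      pd_mul (coord_differentiableAt 0 y) (hD 0 y) j,
      pd_mul (coord_differentiableAt 1 y) (hD 1 y) j,
      pd_mul (coord_differentiableAt 2 y) (hD 2 y) j,
      pd_coord, pd_coord, pd_coord]
    fin_cases j <;> simp <;> ring
  -- second partials of v
  have hpd2v : ∀ (j : Fin 3) (x : E3), pd j (fun y => pd j v y) x
      = 2 * pd j (fun z => u z j) x
        + (x 0 * pd j (fun y => pd j (fun z => u z 0) y) x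
          + x 1 * pd j (fun y => pd j (fun z => u z 1) y) x
          + x 2 * pd j (fun y => pd j (fun z => u z 2) y) x) := by
    intro j x
    have hfe : (fun y => pd j v y)
        = fun y => u y j + (y 0 * pd j (fun z => u z 0) y + y 1 * pd j (fun z => u z 1) y
            + y 2 * pd j (fun z => u z 2) y) := funext fun y => hpdv j y
    have dm : ∀ k : Fin 3, DifferentiableAt ℝ (fun y : E3 => y k * pd j (fun z => u z k) y) x :=
      fun k => (coord_differentiableAt k x).mul (hpdD j k x)
    rw [hfe, pd_add (hD j x) (((dm 0).fun_add (dm 1)).fun_add (dm 2)) j,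
      pd_add ((dm 0).fun_add (dm 1)) (dm 2) j, pd_add (dm 0) (dm 1) j,
      pd_mul (coord_differentiableAt 0 x) (hpdD j 0 x) j,
      pd_mul (coord_differentiableAt 1 x) (hpdD j 1 x) j,
      pd_mul (coord_differentiableAt 2 x) (hpdD j 2 x) j,
      pd_coord, pd_coord, pd_coord]
    fin_cases j <;> simp <;> ring
  -- conclusion
  intro x
  have hl : lap v x = pd 0 (fun y => pd 0 v y) x + pd 1 (fun y => pd 1 v y) x
      + pd 2 (fun y => pd 2 v y) x := by
    simp only [lap, Fin.sum_univ_three]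
  rw [hl, hpd2v 0 x, hpd2v 1 x, hpd2v 2 x, hv x, Fin.sum_univ_three]
  linear_combination 2 * hdiv x + x 0 * hlap0 x + x 1 * hlap1 x + x 2 * hlap2 x
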